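/- Let N be a closed subspace of ℓ², c < 1 a constant, and {I_n} an increasing sequence of finite subsets of ℕ with union ℕ such that c(N, M_{I_n}) ≤ c for all n, where M_I = closed span of {e_k : k ∈ I}. Then the union of the subspaces N ∩ M_{I_n} is dense in N. -/

import Mathlib

/-!
For `x ∈ N` put `u = x - P_{N ⊓ M} x`, a vector of `N ⊖ (N ⊓ M)`. The angle bound gives
`‖P_M u‖ ≤ c ‖u‖`, so by Pythagoras `(1 - c²) ‖u‖² ≤ ‖u - P_M u‖²`; and since `P_{N ⊓ M} x ∈ M`,
`u - P_M u = x - P_M x`. Hence `‖x - P_{N ⊓ M_{I_n}} x‖ ≤ ‖x - P_{M_{I_n}} x‖ / √(1 - c²)`, and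
the right side tends to `0` because the `M_{I_n}` increase to a dense subspace of `ℓ²`.
-/

open ContinuousLinearMap

/-- Cosine of the angle between two subspaces. -/
noncomputable def cosAngle {H : Type*} [NormedAddCommGroup H] [InnerProductSpace ℂ H]
    (M N : Submodule ℂ H) : ℝ :=
  sSup {r : ℝ | ∃ x ∈ M ⊓ (M ⊓ N)ᗮ, ∃ y ∈ N ⊓ (M ⊓ N)ᗮ,
    ‖x‖ = 1 ∧ ‖y‖ = 1 ∧ r = ‖(inner ℂ x y : ℂ)‖}

/-- `M_I`, the closed subspace of `ℓ²` spanned by the canonical basis vectors `{e_k : k ∈ I}`. -/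
noncomputable def MI (I : Set ℕ) : Submodule ℂ (lp (fun _ : ℕ => ℂ) 2) :=
  (Submodule.span ℂ ((fun n => lp.single 2 n (1 : ℂ)) '' I)).topologicalClosure

open Filter Topology

section CosAngle

variable {H : Type*} [NormedAddCommGroup H] [InnerProductSpace ℂ H] {M N : Submodule ℂ H}

lemma cosAngle_nonneg (M N : Submodule ℂ H) : 0 ≤ cosAngle M N :=
  Real.sSup_nonneg <| by rintro _ ⟨_, -, _, -, -, -, rfl⟩; positivity

lemma norm_inner_le_cosAngle_mul {x y : H} (hx : x ∈ M ⊓ (M ⊓ N)ᗮ) (hy : y ∈ N ⊓ (M ⊓ N)ᗮ) :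
    ‖inner ℂ x y‖ ≤ cosAngle M N * ‖x‖ * ‖y‖ := by
  rcases eq_or_ne x 0 with rfl | hx0
  · simp
  rcases eq_or_ne y 0 with rfl | hy0
  · simp
  have hbdd : BddAbove {r : ℝ | ∃ x ∈ M ⊓ (M ⊓ N)ᗮ, ∃ y ∈ N ⊓ (M ⊓ N)ᗮ,
      ‖x‖ = 1 ∧ ‖y‖ = 1 ∧ r = ‖(inner ℂ x y : ℂ)‖} := by
    refine ⟨1, ?_⟩
    rintro _ ⟨u, -, v, -, hu, hv, rfl⟩
    simpa [hu, hv] using norm_inner_le_norm (𝕜 := ℂ) u v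
  have hxy : 0 < ‖x‖ * ‖y‖ := by positivity
  have hunit : ‖inner ℂ x y‖ / (‖x‖ * ‖y‖) ≤ cosAngle M N := by
    refine le_csSup hbdd ⟨(‖x‖⁻¹ : ℂ) • x, Submodule.smul_mem _ _ hx,
      (‖y‖⁻¹ : ℂ) • y, Submodule.smul_mem _ _ hy, norm_smul_inv_norm hx0,
      norm_smul_inv_norm hy0, ?_⟩
    simp only [inner_smul_left, inner_smul_right, norm_mul, RCLike.norm_conj, norm_inv,
      Complex.norm_real, norm_norm]
    ring
  rwa [div_le_iff₀ hxy, ← mul_assoc] at hunit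

lemma starProjection_mem_inf_orthogonal_inf [M.HasOrthogonalProjection] {u : H}
    (hu : u ∈ (N ⊓ M)ᗮ) : M.starProjection u ∈ M ⊓ (N ⊓ M)ᗮ := by
  refine ⟨M.starProjection_apply_mem u, fun w hw => ?_⟩
  rw [← M.inner_starProjection_left_eq_right, M.starProjection_eq_self_iff.mpr hw.2]
  exact hu w hw

lemma norm_starProjection_le_cosAngle_mul [M.HasOrthogonalProjection] {u : H}
    (hu : u ∈ N ⊓ (N ⊓ M)ᗮ) : ‖M.starProjection u‖ ≤ cosAngle N M * ‖u‖ := by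
  have hsq : ‖M.starProjection u‖ ^ 2 ≤ cosAngle N M * ‖u‖ * ‖M.starProjection u‖ :=
    calc ‖M.starProjection u‖ ^ 2 = RCLike.re (inner ℂ (M.starProjection u) u) :=
          (M.re_inner_starProjection_eq_normSq u).symm
      _ ≤ ‖inner ℂ u (M.starProjection u)‖ := by
          rw [norm_inner_symm]; exact RCLike.re_le_norm _
      _ ≤ _ := norm_inner_le_cosAngle_mul hu (starProjection_mem_inf_orthogonal_inf hu.2)
  nlinarith [mul_nonneg (cosAngle_nonneg N M) (norm_nonneg u), norm_nonneg (M.starProjection u)]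

lemma sqrt_one_sub_sq_mul_norm_sub_starProjection_inf_le [M.HasOrthogonalProjection]
    [(N ⊓ M).HasOrthogonalProjection] {c : ℝ} (hc : cosAngle N M ≤ c) {x : H} (hx : x ∈ N) :
    √(1 - c ^ 2) * ‖x - (N ⊓ M).starProjection x‖ ≤ ‖x - M.starProjection x‖ := by
  set u := x - (N ⊓ M).starProjection x
  have hPx : (N ⊓ M).starProjection x ∈ N ⊓ M := Submodule.starProjection_apply_mem _ x
  have hu : u ∈ N ⊓ (N ⊓ M)ᗮ :=
    ⟨N.sub_mem hx hPx.1, Submodule.sub_starProjection_mem_orthogonal x⟩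
  have hdist : u - M.starProjection u = x - M.starProjection x := by
    simp only [u, map_sub, M.starProjection_eq_self_iff.mpr hPx.2]
    abel
  have hpyth : ‖u‖ ^ 2 = ‖M.starProjection u‖ ^ 2 + ‖x - M.starProjection x‖ ^ 2 := by
    rw [← hdist, ← Submodule.starProjection_orthogonal_val]
    exact M.norm_sq_eq_add_norm_sq_starProjection u
  have hproj : ‖M.starProjection u‖ ^ 2 ≤ c ^ 2 * ‖u‖ ^ 2 := by
    rw [← mul_pow]
    exact pow_le_pow_left₀ (norm_nonneg _) ((norm_starProjection_le_cosAngle_mul hu).trans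
      (mul_le_mul_of_nonneg_right hc (norm_nonneg u))) 2
  calc √(1 - c ^ 2) * ‖u‖ = √((1 - c ^ 2) * ‖u‖ ^ 2) := by
        rw [Real.sqrt_mul' _ (sq_nonneg _), Real.sqrt_sq (norm_nonneg _)]
    _ ≤ √(‖x - M.starProjection x‖ ^ 2) := Real.sqrt_le_sqrt (by linarith)
    _ = ‖x - M.starProjection x‖ := Real.sqrt_sq (norm_nonneg _)

theorem tendsto_starProjection_inf_of_cosAngle_le {ι : Type*} {l : Filter ι}
    {U : ι → Submodule ℂ H} [∀ i, (U i).HasOrthogonalProjection]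
    [∀ i, (N ⊓ U i).HasOrthogonalProjection] {c : ℝ} (hc : c < 1)
    (hang : ∀ i, cosAngle N (U i) ≤ c) {x : H} (hx : x ∈ N)
    (hU : Tendsto (fun i => (U i).starProjection x) l (𝓝 x)) :
    Tendsto (fun i => (N ⊓ U i).starProjection x) l (𝓝 x) := by
  rw [tendsto_iff_norm_sub_tendsto_zero] at hU ⊢
  have hbound (i : ι) : ‖(N ⊓ U i).starProjection x - x‖ ≤
      ‖(U i).starProjection x - x‖ / √(1 - c ^ 2) := by
    have hc0 : 0 ≤ c := (cosAngle_nonneg _ _).trans (hang i)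
    have hs : 0 < √(1 - c ^ 2) := Real.sqrt_pos.mpr (by nlinarith)
    rw [le_div_iff₀ hs, norm_sub_rev, norm_sub_rev _ x, mul_comm]
    exact sqrt_one_sub_sq_mul_norm_sub_starProjection_inf_le (hang i) hx
  exact squeeze_zero (fun i => norm_nonneg _) hbound (by simpa using hU.div_const (√(1 - c ^ 2)))

end CosAngle

section SequenceSpace

lemma isClosed_MI (I : Set ℕ) : IsClosed (MI I : Set (lp (fun _ : ℕ => ℂ) 2)) :=
  Submodule.isClosed_topologicalClosure _

instance (I : Set ℕ) : (MI I).HasOrthogonalProjection :=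
  have : CompleteSpace (MI I) := (isClosed_MI I).completeSpace_coe
  inferInstance

lemma MI_mono : Monotone MI := fun _ _ h =>
  Submodule.topologicalClosure_mono (Submodule.span_mono (Set.image_mono h))

lemma MI_univ : MI Set.univ = ⊤ := by
  let b : HilbertBasis ℕ ℂ (lp (fun _ : ℕ => ℂ) 2) := .ofRepr (.refl ℂ _)
  have hb : ⇑b = fun n => lp.single 2 n (1 : ℂ) := funext fun n => (b.repr_symm_single n).symm
  rw [MI, Set.image_univ, ← hb]
  exact b.dense_span

lemma single_mem_MI {I : Set ℕ} {k : ℕ} (hk : k ∈ I) : lp.single 2 k (1 : ℂ) ∈ MI I :=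
  Submodule.le_topologicalClosure _ (Submodule.subset_span ⟨k, hk, rfl⟩)

theorem tendsto_starProjection_MI {ι : Type*} [Preorder ι] {I : ι → Set ℕ} (hI : Monotone I)
    (hcover : ∀ k, ∃ i, k ∈ I i) (x : lp (fun _ : ℕ => ℂ) 2) :
    Tendsto (fun i => (MI (I i)).starProjection x) atTop (𝓝 x) := by
  refine Submodule.starProjection_tendsto_self _ (fun _ _ h => MI_mono (hI h)) x ?_
  rw [← MI_univ]
  refine Submodule.topologicalClosure_mono (Submodule.span_le.mpr ?_)
  rintro _ ⟨k, -, rfl⟩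
  obtain ⟨i, hi⟩ := hcover k
  exact le_iSup (fun i => MI (I i)) i (single_mem_MI hi)

end SequenceSpace

/-- If `{I_n}` is an increasing sequence of finite subsets of `ℕ` with union `ℕ` and
`c(N, M_{I_n}) ≤ c < 1` for all `n`, then `⋃_n (N ∩ M_{I_n})` is dense in `N`. -/
theorem stmt16 (N : Submodule ℂ (lp (fun _ : ℕ => ℂ) 2))
    (hN : IsClosed (N : Set (lp (fun _ : ℕ => ℂ) 2)))
    (c : ℝ) (hc : c < 1) (I : ℕ → Finset ℕ)
    (hmono : ∀ n, I n ⊆ I (n + 1)) (hunion : ∀ k : ℕ, ∃ n, k ∈ I n)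
    (hang : ∀ n, cosAngle N (MI (I n : Set ℕ)) ≤ c) :
    closure (⋃ n, ((N ⊓ MI (I n : Set ℕ) : Submodule ℂ (lp (fun _ : ℕ => ℂ) 2)) :
      Set (lp (fun _ : ℕ => ℂ) 2))) = (N : Set (lp (fun _ : ℕ => ℂ) 2)) := by
  have hI : Monotone fun n => (I n : Set ℕ) :=
    monotone_nat_of_le_succ fun n => Finset.coe_subset.mpr (hmono n)
  have (n : ℕ) : (N ⊓ MI (I n : Set ℕ)).HasOrthogonalProjection :=
    have : CompleteSpace ↥(N ⊓ MI (I n : Set ℕ)) := (hN.inter (isClosed_MI _)).completeSpace_coe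
    inferInstance
  refine subset_antisymm (closure_minimal (Set.iUnion_subset fun n x hx => hx.1) hN)
    fun x hx => ?_
  have hlim : Tendsto (fun n => (N ⊓ MI (I n : Set ℕ)).starProjection x) atTop (𝓝 x) :=
    tendsto_starProjection_inf_of_cosAngle_le hc hang hx
      (tendsto_starProjection_MI hI hunion x)
  exact mem_closure_of_tendsto hlim
    (Eventually.of_forall fun n => Set.mem_iUnion.2 ⟨n, Submodule.starProjection_apply_mem _ x⟩)
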